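/- arXiv:1406.4916 — 2 statements merged into one kernel-verified Lean document; each statement's English description precedes it below -/
import Mathlib

section
/- Let ℓ be a set of primes, χ an even integer, and k, j integers with (2k−χ) and (2j−χ) nonzero and having the same ℓ-adic valuation (i.e., the same p-adic valuation for every p ∈ ℓ). Let m = ∏_{p∈ℓ} p^{v_p(2k−χ)}. Then (2k−χ)(2j−χ)/m + χ is an even integer, say equal to 2h, so that (2h−χ) = (1/m)(2k−χ)(2j−χ), and both (2h−χ)/(2k−χ) = (2j−χ)/m and (2h−χ)/(2j−χ) = (2k−χ)/m are integers with trivial ℓ-adic valuation. -/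
/-- Arithmetic step of Theorem A (even-dimensional case): if `χ` is even and
`2k - χ`, `2j - χ` are nonzero with the same `ℓ`-adic valuation, and
`m = ∏_{p ∈ ℓ} p ^ (v_p (2k - χ))`, then `(2k - χ)(2j - χ)/m + χ` is an even
integer `2h`, `m` divides both `2k - χ` and `2j - χ`, and the quotients
`(2k - χ)/m` and `(2j - χ)/m` have trivial `ℓ`-adic valuation. -/
theorem stmt4 (ℓ : Finset ℕ) (hℓ : ∀ p ∈ ℓ, p.Prime) (χ k j : ℤ) (hχ : Even χ)
    (hk : 2 * k - χ ≠ 0) (hj : 2 * j - χ ≠ 0)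
    (hval : ∀ p ∈ ℓ, padicValInt p (2 * k - χ) = padicValInt p (2 * j - χ)) :
    ∃ h : ℤ,
      (∏ p ∈ ℓ, (p : ℤ) ^ padicValInt p (2 * k - χ)) * (2 * h - χ)
          = (2 * k - χ) * (2 * j - χ) ∧
      (∏ p ∈ ℓ, (p : ℤ) ^ padicValInt p (2 * k - χ)) ∣ (2 * k - χ) ∧
      (∏ p ∈ ℓ, (p : ℤ) ^ padicValInt p (2 * k - χ)) ∣ (2 * j - χ) ∧
      ∀ p ∈ ℓ,
        padicValInt p ((2 * k - χ) / ∏ q ∈ ℓ, (q : ℤ) ^ padicValInt q (2 * k - χ)) = 0 ∧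
        padicValInt p ((2 * j - χ) / ∏ q ∈ ℓ, (q : ℤ) ^ padicValInt q (2 * k - χ)) = 0 := by
  set a := 2 * k - χ with ha
  set b := 2 * j - χ with hb
  set m : ℤ := ∏ p ∈ ℓ, (p : ℤ) ^ padicValInt p a with hm
  have hpair : (↑ℓ : Set ℕ).Pairwise
      (Function.onFun IsCoprime fun p : ℕ => (p : ℤ) ^ padicValInt p a) := by
    intro p hp q hq hpq
    exact (((Nat.coprime_primes (hℓ p hp) (hℓ q hq)).mpr hpq).isCoprime).pow
  have hdvd : ∀ p ∈ ℓ, (p : ℤ) ^ padicValInt p a ∣ a := by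
    intro p hp
    haveI : Fact p.Prime := ⟨hℓ p hp⟩
    exact padicValInt_dvd a
  have hma : m ∣ a := Finset.prod_dvd_of_coprime hpair hdvd
  have hmb : m ∣ b := by
    refine Finset.prod_dvd_of_coprime hpair ?_
    intro p hp
    haveI : Fact p.Prime := ⟨hℓ p hp⟩
    rw [hval p hp]
    exact padicValInt_dvd b
  have hm0 : m ≠ 0 := by
    refine Finset.prod_ne_zero_iff.mpr fun p hp => ?_
    exact pow_ne_zero _ (Int.natCast_ne_zero.mpr (hℓ p hp).ne_zero)
  obtain ⟨c, hc⟩ := id hma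
  obtain ⟨d, hd⟩ := id hmb
  have hbe : Even b := by
    obtain ⟨t, ht⟩ := hχ
    exact ⟨j - t, by omega⟩
  have hcb : Even (c * b + χ) := (hbe.mul_left c).add hχ
  obtain ⟨h, hh⟩ := hcb
  refine ⟨h, ?_, hma, hmb, ?_⟩
  · have : 2 * h - χ = c * b := by omega
    rw [this, ← mul_assoc, ← hc]
  · intro p hp
    haveI : Fact p.Prime := ⟨hℓ p hp⟩
    have hpm : (p : ℤ) ^ padicValInt p a ∣ m :=
      Finset.dvd_prod_of_mem _ hp
    have hca : a / m = c := by rw [hc, Int.mul_ediv_cancel_left _ hm0]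
    have hdb : b / m = d := by rw [hd, Int.mul_ediv_cancel_left _ hm0]
    constructor
    · rw [hca]
      refine padicValInt.eq_zero_of_not_dvd fun hpc => ?_
      have h1 : (p : ℤ) ^ padicValInt p a * p ∣ m * c := mul_dvd_mul hpm hpc
      rw [← pow_succ, ← hc] at h1
      rcases (padicValInt_dvd_iff _ _).mp h1 with h0 | hle
      · exact hk h0
      · omega
    · rw [hdb]
      refine padicValInt.eq_zero_of_not_dvd fun hpd => ?_
      have h1 : (p : ℤ) ^ padicValInt p a * p ∣ m * d := mul_dvd_mul hpm hpd
      rw [← pow_succ, ← hd] at h1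
      rcases (padicValInt_dvd_iff _ _).mp h1 with h0 | hle
      · exact hj h0
      · have hv := hval p hp
        omega
end

section
/- For k ≥ 2, the first homology group of the unordered configuration space of k points in the 2-sphere is cyclic of order 2k−2: H_1(C_k(S²); ℤ) ≅ ℤ/(2k−2)ℤ. Equivalently, the abelianization of the sphere braid group π_1(C_k(S²)) is ℤ/(2k−2). -/
/-!
Every braid relation `σᵢ σᵢ₊₁ σᵢ = σᵢ₊₁ σᵢ σᵢ₊₁` becomes `σᵢ = σᵢ₊₁` after abelianizing, so the
abelianization is cyclic, generated by the common image `σ` of the generators. The sphere relation,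
a word of length `2(k-1)` in the generators, then says `σ ^ (2k-2) = 1`, and sending every
generator to `1 ∈ ZMod (2k-2)` kills all relations, so the order of `σ` is exactly `2k-2`.
-/

/-- The standard braid relations on `n` generators `σ_0, …, σ_{n-1}`. -/
def braidRels (n : ℕ) : Set (FreeGroup (Fin n)) :=
  {r | (∃ i j : Fin n, (i : ℕ) + 1 = (j : ℕ) ∧
          r = FreeGroup.of i * FreeGroup.of j * FreeGroup.of i *
              (FreeGroup.of j * FreeGroup.of i * FreeGroup.of j)⁻¹) ∨
       (∃ i j : Fin n, (j : ℕ) + 2 ≤ (i : ℕ) ∧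
          r = FreeGroup.of i * FreeGroup.of j * (FreeGroup.of j * FreeGroup.of i)⁻¹)}

/-- The Fadell–Van Buskirk sphere relation
`σ_0 σ_1 ⋯ σ_{n-1} · σ_{n-1} ⋯ σ_1 σ_0` on `n` generators. -/
def sphereRel (n : ℕ) : FreeGroup (Fin n) :=
  (List.ofFn (fun i : Fin n => FreeGroup.of i)).prod *
    ((List.ofFn (fun i : Fin n => FreeGroup.of i)).reverse).prod

theorem eq_of_braid {M : Type*} [CancelCommMonoid M] {a b : M} (h : a * b * a = b * a * b) :
    a = b := by
  rw [mul_right_comm, mul_comm b a] at h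
  exact mul_left_cancel (mul_right_cancel h)

section ZModHom

variable {G : Type*} [Group G] {m : ℕ}

def zmodPowHom (g : G) (hg : g ^ m = 1) : Multiplicative (ZMod m) →* G :=
  AddMonoidHom.toMultiplicativeLeft
    (ZMod.lift m ⟨zmultiplesHom (Additive G) (Additive.ofMul g), by
      rw [zmultiplesHom_apply, natCast_zsmul, ← ofMul_pow, hg, ofMul_one]⟩)

theorem zmodPowHom_ofAdd_one (g : G) (hg : g ^ m = 1) :
    zmodPowHom g hg (Multiplicative.ofAdd 1) = g := by
  rw [zmodPowHom, AddMonoidHom.toMultiplicativeLeft_apply_apply, toAdd_ofAdd, ← Int.cast_one,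
    ZMod.lift_coe]
  simp

theorem ofAdd_one_pow_self : (Multiplicative.ofAdd (1 : ZMod m)) ^ m = 1 := by
  rw [← ofAdd_nsmul, nsmul_one, ZMod.natCast_self, ofAdd_zero]

theorem MonoidHom.ext_zmod {f g : Multiplicative (ZMod m) →* G}
    (h : f (Multiplicative.ofAdd 1) = g (Multiplicative.ofAdd 1)) : f = g := by
  refine MonoidHom.ext fun x => ?_
  obtain ⟨i, hi⟩ := ZMod.intCast_surjective (Multiplicative.toAdd x)
  have hx : x = Multiplicative.ofAdd (1 : ZMod m) ^ i := by
    rw [← ofAdd_zsmul, zsmul_one, hi, ofAdd_toAdd]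
  rw [hx, map_zpow, map_zpow, h]

end ZModHom

section ConstantImage

variable {n : ℕ}

theorem map_braidRels_of_forall_eq {G : Type*} [Group G] {f : FreeGroup (Fin n) →* G} {x : G}
    (hf : ∀ i, f (FreeGroup.of i) = x) {r : FreeGroup (Fin n)} (hr : r ∈ braidRels n) :
    f r = 1 := by
  rcases hr with ⟨i, j, -, rfl⟩ | ⟨i, j, -, rfl⟩ <;> simp [hf]

theorem map_sphereRel_of_forall_eq {M : Type*} [Monoid M] {f : FreeGroup (Fin n) →* M} {x : M}
    (hf : ∀ i, f (FreeGroup.of i) = x) : f (sphereRel n) = x ^ (2 * n) := by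
  simp [sphereRel, map_list_prod, List.map_ofFn, Function.comp_def, hf, two_mul, pow_add]

end ConstantImage

namespace SphereBraid

abbrev rels (n : ℕ) : Set (FreeGroup (Fin n)) := braidRels n ∪ {sphereRel n}

abbrev Ab (n : ℕ) := Abelianization (PresentedGroup (rels n))

def abMk (n : ℕ) : FreeGroup (Fin n) →* Ab n :=
  Abelianization.of.comp (PresentedGroup.mk (rels n))

variable {n : ℕ}

def gen (i : Fin n) : Ab n := abMk n (FreeGroup.of i)

theorem abMk_eq_one {r : FreeGroup (Fin n)} (hr : r ∈ rels n) : abMk n r = 1 := by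
  simp [abMk, PresentedGroup.one_of_mem hr]

theorem gen_castSucc (i : Fin n) : gen i.castSucc = gen i.succ := by
  refine eq_of_braid (mul_inv_eq_one.mp ?_)
  simpa [gen] using abMk_eq_one (Or.inl (Or.inl ⟨i.castSucc, i.succ, by simp, rfl⟩))

theorem gen_eq_gen_zero (i : Fin (n + 1)) : gen i = gen 0 := by
  induction i using Fin.induction with
  | zero => rfl
  | succ i ih => rw [← gen_castSucc, ih]

theorem gen_zero_pow : gen (0 : Fin (n + 1)) ^ (2 * (n + 1)) = 1 := by
  rw [← map_sphereRel_of_forall_eq gen_eq_gen_zero]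
  exact abMk_eq_one (Or.inr rfl)

variable (n) in
def toZMod : Ab n →* Multiplicative (ZMod (2 * n)) :=
  Abelianization.lift <| PresentedGroup.toGroup (f := fun _ => Multiplicative.ofAdd 1) <| by
    have hf (i : Fin n) : FreeGroup.lift (fun _ => Multiplicative.ofAdd 1) (FreeGroup.of i) =
        Multiplicative.ofAdd (1 : ZMod (2 * n)) := FreeGroup.lift_apply_of
    rintro r (hr | rfl)
    · exact map_braidRels_of_forall_eq hf hr
    · rw [map_sphereRel_of_forall_eq hf, ofAdd_one_pow_self]

theorem toZMod_gen (i : Fin n) : toZMod n (gen i) = Multiplicative.ofAdd 1 :=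
  (Abelianization.lift_apply_of _ _).trans (PresentedGroup.toGroup.of _)

variable (n) in
def mulEquivZMod : Ab (n + 1) ≃* Multiplicative (ZMod (2 * (n + 1))) :=
  MonoidHom.toMulEquiv (toZMod (n + 1)) (zmodPowHom (gen 0) gen_zero_pow)
    (by
      refine Abelianization.hom_ext _ _ (PresentedGroup.ext fun i => ?_)
      simp only [MonoidHom.comp_apply, MonoidHom.id_apply]
      change zmodPowHom _ _ (toZMod _ (gen i)) = gen i
      rw [toZMod_gen, zmodPowHom_ofAdd_one, gen_eq_gen_zero i])
    (MonoidHom.ext_zmod <| by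
      simp only [MonoidHom.comp_apply, zmodPowHom_ofAdd_one, toZMod_gen, MonoidHom.id_apply])

end SphereBraid

/-- For `k ≥ 2`, the abelianization of the sphere braid group
`π_1(C_k(S²))`, presented by the braid relations together with the sphere relation,
is cyclic of order `2k - 2`. -/
theorem stmt12 (k : ℕ) (hk : 2 ≤ k) :
    Nonempty
      (Abelianization (PresentedGroup (braidRels (k - 1) ∪ {sphereRel (k - 1)}))
        ≃* Multiplicative (ZMod (2 * k - 2))) := by
  obtain ⟨n, rfl⟩ : ∃ n, k = n + 2 := ⟨k - 2, by omega⟩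
  rw [show 2 * (n + 2) - 2 = 2 * (n + 1) by omega]
  exact ⟨SphereBraid.mulEquivZMod n⟩
end
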